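/- Let P : M → Y be a submetry where M is a geodesic metric space, Y is a metric space, and suppose all fibers of P are path-connected and M is simply connected and locally path-connected, while Y is locally simply connected and paths in Y admit horizontal lifts (every rectifiable curve in Y starting at P(x) lifts to a curve in M of the same length starting at x). Then Y is simply connected. -/

import Mathlib

/-!
A submetry is continuous and open. Since its fibers are path-connected, the preimage of
a connected open set is path-connected, so a path lying in a small simply connected region of `Y`
is homotopic to the image of a path joining any two prescribed points over its endpoints.
Subdividing an arbitrary path into such pieces shows that every path of `Y` is, up to homotopy,
the image of a path of `M`; as `M` is simply connected, any two paths of `Y` with the same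
endpoints are therefore homotopic.
-/

/-- `P` is a submetry: it maps every closed ball surjectively onto the
closed ball of the same radius around the image of the center. -/
def IsSubmetry {X Y : Type*} [MetricSpace X] [MetricSpace Y] (P : X → Y) : Prop :=
  ∀ (x : X) (r : ℝ), 0 ≤ r → P '' Metric.closedBall x r = Metric.closedBall (P x) r

open Set Topology

namespace IsSubmetry

variable {X Y : Type*} [MetricSpace X] [MetricSpace Y] {P : X → Y}

theorem lipschitzWith_one (hP : IsSubmetry P) : LipschitzWith 1 P :=
  LipschitzWith.of_dist_le_mul fun (x x' : X) => by
    have : P x' ∈ Metric.closedBall (P x) (dist x' x) :=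
      hP x (dist x' x) dist_nonneg ▸ mem_image_of_mem P (Metric.mem_closedBall.2 le_rfl)
    simpa [dist_comm] using this

theorem isOpenMap (hP : IsSubmetry P) : IsOpenMap P :=
  IsOpenMap.of_nhds_le fun x =>
    (Metric.nhds_basis_closedBall.le_basis_iff (Metric.nhds_basis_closedBall.map P)).2
      fun ε hε => ⟨ε, hε, (hP x ε hε.le).ge⟩

end IsSubmetry

section

variable {X Y : Type*} [TopologicalSpace X] [TopologicalSpace Y]

theorem IsOpenMap.isPathConnected_preimage [LocallyPathConnectedSpace X] {f : X → Y}
    (hfc : Continuous f) (hfo : IsOpenMap f) (hfib : ∀ y, IsPathConnected (f ⁻¹' {y}))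
    {U : Set Y} (hU : IsOpen U) (hUc : IsConnected U) : IsPathConnected (f ⁻¹' U) := by
  rw [← (hU.preimage hfc).isConnected_iff_isPathConnected, isConnected_iff_connectedSpace,
    connectedSpace_iff_univ]
  have hq : IsQuotientMap (U.restrictPreimage f) :=
    (hfo.restrictPreimage U).isQuotientMap hfc.restrictPreimage
      (U.restrictPreimage_surjective fun y => (hfib y).nonempty)
  have hfib' (y : U) : U.restrictPreimage f ⁻¹' {y} = Subtype.val ⁻¹' (f ⁻¹' {y.1}) := by
    ext x
    simp [Subtype.ext_iff]
  have : ConnectedSpace U := isConnected_iff_connectedSpace.mp hUc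
  simpa using hq.isCoinducing.isConnected_preimage_of_isClosed
    (fun y => hfib' y ▸
      ((hfib y).preimage_coe (preimage_mono (singleton_subset_iff.2 y.2))).isConnected)
    isClosed_univ isConnected_univ

theorem Path.homotopic_of_range_subset {V : Set X} [SimplyConnectedSpace V] {a b : X}
    {p q : Path a b} (hp : range p ⊆ V) (hq : range q ⊆ V) : p.Homotopic q := by
  lift a to V using hp ⟨0, p.source⟩
  lift b to V using hp ⟨1, p.target⟩
  let p' : Path a b :=
    { toFun t := ⟨p t, hp ⟨t, rfl⟩⟩
      source' := by ext; simp
      target' := by ext; simp }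
  let q' : Path a b :=
    { toFun t := ⟨q t, hq ⟨t, rfl⟩⟩
      source' := by ext; simp
      target' := by ext; simp }
  exact (SimplyConnectedSpace.paths_homotopic p' q').map ⟨Subtype.val, continuous_subtype_val⟩

/-- Both endpoints of the lift `β` are prescribed, so that lifts of consecutive pieces of a path
can be concatenated. -/
def LiftsUpToHomotopy (f : C(X, Y)) {a b : Y} (γ : Path a b) : Prop :=
  ∀ x₀ x₁ (h₀ : f x₀ = a) (h₁ : f x₁ = b),
    ∃ β : Path x₀ x₁, (β.map f.continuous).Homotopic (γ.cast h₀ h₁)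

namespace LiftsUpToHomotopy

variable {f : C(X, Y)} {a b c : Y}

theorem of_homotopic {γ γ' : Path a b} (h : γ.Homotopic γ') (hγ : LiftsUpToHomotopy f γ) :
    LiftsUpToHomotopy f γ' := fun x₀ x₁ h₀ h₁ =>
  let ⟨β, hβ⟩ := hγ x₀ x₁ h₀ h₁
  ⟨β, hβ.trans (h.pathCast h₀ h₁)⟩

theorem trans (hb : b ∈ range f) {γ : Path a b} {γ' : Path b c} (hγ : LiftsUpToHomotopy f γ)
    (hγ' : LiftsUpToHomotopy f γ') : LiftsUpToHomotopy f (γ.trans γ') := by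
  intro x₀ x₂ h₀ h₂
  obtain ⟨x₁, h₁⟩ := hb
  obtain ⟨β, hβ⟩ := hγ x₀ x₁ h₀ h₁
  obtain ⟨β', hβ'⟩ := hγ' x₁ x₂ h₁ h₂
  refine ⟨β.trans β', ?_⟩
  rw [Path.map_trans, Path.cast_trans _ _ _ h₁]
  exact hβ.hcomp hβ'

theorem cast_iff {γ : Path a b} {a' b' : Y} (ha : a' = a) (hb : b' = b) :
    LiftsUpToHomotopy f (γ.cast ha hb) ↔ LiftsUpToHomotopy f γ := by
  subst ha hb
  rfl

end LiftsUpToHomotopy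

theorem liftsUpToHomotopy_of_range_subset {f : C(X, Y)} {O V : Set Y} [SimplyConnectedSpace V]
    (hO : IsPathConnected (f ⁻¹' O)) (hOV : O ⊆ V) {a b : Y} {γ : Path a b}
    (hγ : range γ ⊆ O) : LiftsUpToHomotopy f γ := by
  intro x₀ x₁ h₀ h₁
  obtain ⟨β, hβ⟩ := hO.joinedIn x₀ (hγ ⟨0, γ.source.trans h₀.symm⟩)
    x₁ (hγ ⟨1, γ.target.trans h₁.symm⟩)
  refine ⟨β, Path.homotopic_of_range_subset (V := V) ?_ (hγ.trans hOV)⟩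
  rintro _ ⟨t, rfl⟩
  exact hOV (hβ t)

theorem exists_mem_nhds_forall_liftsUpToHomotopy [LocallyPathConnectedSpace X]
    [LocallyPathConnectedSpace Y] {f : C(X, Y)} (hfo : IsOpenMap f)
    (hfib : ∀ y, IsPathConnected (f ⁻¹' {y})) {y : Y} {V : Set Y} (hV : V ∈ 𝓝 y)
    [SimplyConnectedSpace V] :
    ∃ O ∈ 𝓝 y, ∀ (a b : Y) (γ : Path a b), range γ ⊆ O → LiftsUpToHomotopy f γ := by
  have hy : y ∈ interior V := mem_interior_iff_mem_nhds.2 hV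
  have hO : IsOpen (pathComponentIn (interior V) y) := isOpen_interior.pathComponentIn y
  refine ⟨_, hO.mem_nhds (mem_pathComponentIn_self hy), fun a b γ hγ =>
    liftsUpToHomotopy_of_range_subset ?_ (pathComponentIn_subset.trans interior_subset) hγ⟩
  exact hfo.isPathConnected_preimage f.continuous hfib hO
    (isPathConnected_pathComponentIn hy).isConnected

theorem liftsUpToHomotopy_of_forall_mem_nhds {f : C(X, Y)} (hsurj : Function.Surjective f)
    (hloc : ∀ y, ∃ O ∈ 𝓝 y, ∀ (a b : Y) (γ : Path a b), range γ ⊆ O → LiftsUpToHomotopy f γ)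
    {a b : Y} (γ : Path a b) : LiftsUpToHomotopy f γ := by
  choose O hO hOlift using hloc
  obtain ⟨t, ht0, htmono, ⟨n, htn⟩, htO⟩ := exists_monotone_Icc_subset_open_cover_unitInterval
    (c := fun s => γ ⁻¹' interior (O (γ s))) (fun s => isOpen_interior.preimage γ.continuous)
    (fun s _ => mem_iUnion.2 ⟨s, mem_interior_iff_mem_nhds.2 (hO _)⟩)
  have hsubpath (m : ℕ) : LiftsUpToHomotopy f (γ.subpath (t 0) (t m)) := by
    induction m with
    | zero =>
      rw [Path.subpath_self]
      exact hOlift _ _ _ _ (by simpa using mem_of_mem_nhds (hO (γ (t 0))))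
    | succ m ih =>
      obtain ⟨s, hs⟩ := htO m
      refine (ih.trans (hsurj _) ?_).of_homotopic ⟨Path.Homotopy.subpathTransSubpath γ _ _ _⟩
      refine hOlift (γ s) _ _ _ ?_
      rw [Path.range_subpath_of_le _ _ _ (htmono m.le_succ), image_subset_iff]
      exact hs.trans (preimage_mono interior_subset)
  have := hsubpath n
  rwa [ht0, htn n le_rfl, Path.subpath_zero_one, LiftsUpToHomotopy.cast_iff] at this

theorem SimplyConnectedSpace.of_liftsUpToHomotopy [SimplyConnectedSpace X] {f : C(X, Y)}
    (hsurj : Function.Surjective f)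
    (hlift : ∀ (a b : Y) (γ : Path a b), LiftsUpToHomotopy f γ) : SimplyConnectedSpace Y := by
  rw [simply_connected_iff_paths_homotopic']
  refine ⟨hsurj.pathConnectedSpace f.continuous, fun {a b} p q => ?_⟩
  obtain ⟨x₀, rfl⟩ := hsurj a
  obtain ⟨x₁, rfl⟩ := hsurj b
  obtain ⟨β, hβ⟩ := hlift _ _ p x₀ x₁ rfl rfl
  obtain ⟨β', hβ'⟩ := hlift _ _ q x₀ x₁ rfl rfl
  exact hβ.symm.trans (((SimplyConnectedSpace.paths_homotopic β β').map f).trans hβ')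

end

theorem submetry_connected_fibers_simply_connected_general
    {M Y : Type*} [MetricSpace M] [MetricSpace Y]
    (P : M → Y) (hP : IsSubmetry P)
    (hfib : ∀ y : Y, IsPathConnected (P ⁻¹' {y}))
    [SimplyConnectedSpace M] [LocallyPathConnectedSpace M]
    (hlocSC : ∀ y : Y, ∀ U ∈ nhds y, ∃ V ∈ nhds y, V ⊆ U ∧ SimplyConnectedSpace V) :
    SimplyConnectedSpace Y := by
  have hPc : Continuous P := hP.lipschitzWith_one.continuous
  have hsurj : Function.Surjective P := fun y => (hfib y).nonempty
  have : LocallyPathConnectedSpace Y :=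
    (hP.isOpenMap.isQuotientMap hPc hsurj).locallyPathConnectedSpace
  refine SimplyConnectedSpace.of_liftsUpToHomotopy (f := ⟨P, hPc⟩) hsurj fun a b γ =>
    liftsUpToHomotopy_of_forall_mem_nhds hsurj (fun y => ?_) γ
  obtain ⟨V, hV, -, hVsc⟩ := hlocSC y univ Filter.univ_mem
  exact exists_mem_nhds_forall_liftsUpToHomotopy hP.isOpenMap hfib hV

/-- If `P : M → Y` is a submetry from a simply connected, locally path-connected
geodesic space with path-connected fibers onto a locally simply connected space
in which rectifiable curves admit horizontal lifts, then `Y` is simply connected. -/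
theorem submetry_connected_fibers_simply_connected
    {M Y : Type*} [MetricSpace M] [MetricSpace Y]
    (hgeo : ∀ x y : M, ∃ z : M, dist x z = dist x y / 2 ∧ dist z y = dist x y / 2)
    (P : M → Y) (hP : IsSubmetry P)
    (hfib : ∀ y : Y, IsPathConnected (P ⁻¹' {y}))
    [SimplyConnectedSpace M] [LocallyPathConnectedSpace M]
    (hlocSC : ∀ y : Y, ∀ U ∈ nhds y, ∃ V ∈ nhds y, V ⊆ U ∧ SimplyConnectedSpace V)
    (hlift : ∀ σ : ℝ → Y, ContinuousOn σ (Set.Icc 0 1) →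
      eVariationOn σ (Set.Icc 0 1) ≠ ⊤ →
      ∀ x : M, P x = σ 0 →
        ∃ γ : ℝ → M, ContinuousOn γ (Set.Icc 0 1) ∧ γ 0 = x ∧
          (∀ t ∈ Set.Icc (0:ℝ) 1, P (γ t) = σ t) ∧
          eVariationOn γ (Set.Icc 0 1) = eVariationOn σ (Set.Icc 0 1)) :
    SimplyConnectedSpace Y :=
  submetry_connected_fibers_simply_connected_general P hP hfib hlocSC
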